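/- Let X := {1/n : n ∈ ℕ₊} and μ := ∑_{k=1}^∞ 2^{-k} δ_{1/k}. Then inf_{x ∈ X} μ(B_{2^{-n}}(x)) = 2^{1-2^n}, and there is no constant c > 0 such that 2^{1-2^n} ≥ c·2^{-n} for all n ∈ ℕ. -/

import Mathlib

/-!
Every point `1/(m+1)` of `X` carries mass at least `2^(1-N)` in its ball of radius `1/N`: its own
atom does if `m + 1 < N`, and otherwise the ball contains the whole tail `{1/k : k ≥ N} ⊆ (0, 1/N]`,
whose mass is `2^(1-N)`. The point `1/N²` attains this bound, because an atom `1/k` with `k < N`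
lies at distance at least `1/(N-1) - 1/N² > 1/N` from it. For `N = 2^n` the infimum `2^(1-2^n)`
decays doubly exponentially, so no `c · 2^(-n)` stays below it.
-/

open MeasureTheory ENNReal Set Metric

lemma MeasureTheory.Measure.sum_smul_dirac_apply {ι α : Type*} [MeasurableSpace α]
    (w : ι → ℝ≥0∞) (a : ι → α) {s : Set α} (hs : MeasurableSet s) :
    (Measure.sum fun i => w i • Measure.dirac (a i)) s = ∑' i, (a ⁻¹' s).indicator w i := by
  rw [Measure.sum_apply _ hs]
  refine tsum_congr fun i => ?_
  by_cases hi : a i ∈ s <;> simp [Measure.dirac_apply' _ hs, hi]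

lemma ENNReal.tsum_inv_two_pow_add_succ (M : ℕ) :
    ∑' j : ℕ, (2 : ℝ≥0∞)⁻¹ ^ (j + M + 1) = 2⁻¹ ^ M := by
  simp_rw [add_right_comm _ M 1, pow_add _ _ M, ENNReal.tsum_mul_right,
    ENNReal.tsum_geometric_add_one, one_sub_inv_two, inv_inv,
    ENNReal.inv_mul_cancel two_ne_zero ofNat_ne_top, one_mul]

lemma Real.dist_lt_of_mem_Ioc_zero {x y r : ℝ} (hx : x ∈ Ioc 0 r) (hy : y ∈ Ioc 0 r) :
    dist x y < r := by
  rw [Real.dist_eq, abs_sub_lt_iff]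
  constructor <;> linarith [hx.1, hx.2, hy.1, hy.2]

lemma inv_add_inv_sq_le_inv {K : Type*} [Field K] [LinearOrder K] [IsStrictOrderedRing K]
    {a b : K} (ha : 0 < a) (hab : a + 1 ≤ b) :
    b⁻¹ + (b ^ 2)⁻¹ ≤ a⁻¹ := by
  have hb : 0 < b := by linarith
  rw [← sub_nonneg]
  have key : a⁻¹ - (b⁻¹ + (b ^ 2)⁻¹) = (b * (b - a) - a) / (a * b ^ 2) := by
    field_simp; ring
  rw [key]
  apply div_nonneg <;> nlinarith

noncomputable def harmonicAtoms : Measure ℝ :=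
  Measure.sum fun k : ℕ => ((2 : ℝ≥0∞)⁻¹ ^ (k + 1)) • Measure.dirac (((k : ℝ) + 1)⁻¹)

lemma harmonicAtoms_ball (x r : ℝ) :
    harmonicAtoms (ball x r) =
      ∑' k : ℕ, {k : ℕ | ((k : ℝ) + 1)⁻¹ ∈ ball x r}.indicator (fun k => 2⁻¹ ^ (k + 1)) k :=
  Measure.sum_smul_dirac_apply _ _ measurableSet_ball

lemma inv_natCast_succ_mem_Ioc {N k : ℕ} (hN : 0 < N) (h : N ≤ k + 1) :
    ((k : ℝ) + 1)⁻¹ ∈ Ioc 0 (N : ℝ)⁻¹ :=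
  ⟨by positivity, inv_anti₀ (by exact_mod_cast hN) (by exact_mod_cast h)⟩

lemma le_of_inv_natCast_succ_mem_ball {N k : ℕ}
    (hk : ((k : ℝ) + 1)⁻¹ ∈ ball ((N : ℝ) ^ 2)⁻¹ (N : ℝ)⁻¹) : N ≤ k + 1 := by
  by_contra! h
  have hle : (N : ℝ)⁻¹ + ((N : ℝ) ^ 2)⁻¹ ≤ ((k : ℝ) + 1)⁻¹ :=
    inv_add_inv_sq_le_inv (by positivity) (by exact_mod_cast h)
  rw [mem_ball, Real.dist_eq, abs_sub_lt_iff] at hk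
  linarith [hk.1]

lemma inv_two_pow_le_harmonicAtoms_ball {N : ℕ} (hN : 0 < N) (m : ℕ) :
    2⁻¹ ^ (N - 1) ≤ harmonicAtoms (ball ((m : ℝ) + 1)⁻¹ (N : ℝ)⁻¹) := by
  rw [harmonicAtoms_ball]
  rcases lt_or_ge (m + 1) N with hm | hm
  · calc (2 : ℝ≥0∞)⁻¹ ^ (N - 1) ≤ 2⁻¹ ^ (m + 1) :=
          pow_le_pow_right_of_le_one' (by norm_num) (by omega)
      _ ≤ _ := by
        refine le_of_eq_of_le ?_ (ENNReal.le_tsum m)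
        rw [indicator_of_mem]
        exact mem_ball_self (by positivity)
  · calc (2 : ℝ≥0∞)⁻¹ ^ (N - 1)
        = ∑' j : ℕ, {k : ℕ | ((k : ℝ) + 1)⁻¹ ∈ ball ((m : ℝ) + 1)⁻¹ (N : ℝ)⁻¹}.indicator
            (fun k => 2⁻¹ ^ (k + 1)) (j + (N - 1)) := by
          rw [← ENNReal.tsum_inv_two_pow_add_succ]
          refine tsum_congr fun j => ?_
          rw [indicator_of_mem]
          exact Real.dist_lt_of_mem_Ioc_zero (inv_natCast_succ_mem_Ioc hN (by omega))
            (inv_natCast_succ_mem_Ioc hN hm)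
      _ ≤ _ := ENNReal.tsum_comp_le_tsum_of_injective (add_left_injective _) _

lemma harmonicAtoms_ball_le (N : ℕ) :
    harmonicAtoms (ball ((N : ℝ) ^ 2)⁻¹ (N : ℝ)⁻¹) ≤ 2⁻¹ ^ (N - 1) := by
  rw [harmonicAtoms_ball]
  set P := {k : ℕ | ((k : ℝ) + 1)⁻¹ ∈ ball ((N : ℝ) ^ 2)⁻¹ (N : ℝ)⁻¹}
  have hP : Function.support (P.indicator fun k => (2 : ℝ≥0∞)⁻¹ ^ (k + 1)) ⊆
      range (· + (N - 1)) := fun k hk => by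
    have hkP : k ∈ P := support_indicator_subset hk
    have := le_of_inv_natCast_succ_mem_ball hkP
    exact ⟨k - (N - 1), by simp only; omega⟩
  calc ∑' k, P.indicator (fun k => (2 : ℝ≥0∞)⁻¹ ^ (k + 1)) k
      = ∑' j, P.indicator (fun k => (2 : ℝ≥0∞)⁻¹ ^ (k + 1)) (j + (N - 1)) :=
        ((add_left_injective (N - 1)).tsum_eq hP).symm
    _ ≤ ∑' j : ℕ, (2 : ℝ≥0∞)⁻¹ ^ (j + (N - 1) + 1) :=
        ENNReal.tsum_le_tsum fun j => indicator_le_self _ _ _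
    _ = 2⁻¹ ^ (N - 1) := ENNReal.tsum_inv_two_pow_add_succ _

lemma ENNReal.two_zpow_one_sub_two_pow (n : ℕ) :
    (2 : ℝ≥0∞) ^ ((1 : ℤ) - 2 ^ n) = 2⁻¹ ^ (2 ^ n - 1) := by
  have h : (1 : ℤ) - 2 ^ n = -((2 ^ n - 1 : ℕ) : ℤ) := by
    have := Nat.one_le_two_pow (n := n)
    push_cast [this]
    ring
  rw [h, ENNReal.zpow_neg, zpow_natCast, ENNReal.inv_pow]

lemma ENNReal.not_exists_pos_mul_inv_two_pow_le_inv_two_pow_two_pow :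
    ¬∃ c : ℝ≥0∞, 0 < c ∧ ∀ n : ℕ, c * 2⁻¹ ^ n ≤ 2⁻¹ ^ (2 ^ n - 1) := by
  rintro ⟨c, hc, h⟩
  obtain ⟨j, hj⟩ := ENNReal.exists_inv_two_pow_lt hc.ne'
  have hexp : j + (j + 2) ≤ 2 ^ (j + 2) - 1 := by
    have := Nat.lt_two_pow_self (n := j)
    rw [pow_add]
    omega
  have hcj : c * 2⁻¹ ^ (j + 2) ≤ 2⁻¹ ^ j * 2⁻¹ ^ (j + 2) :=
    calc c * 2⁻¹ ^ (j + 2) ≤ 2⁻¹ ^ (2 ^ (j + 2) - 1) := h _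
      _ ≤ 2⁻¹ ^ (j + (j + 2)) := pow_le_pow_right_of_le_one' (by norm_num) hexp
      _ = 2⁻¹ ^ j * 2⁻¹ ^ (j + 2) := pow_add _ _ _
  rw [ENNReal.mul_le_mul_iff_left (by simp) (by simp)] at hcj
  exact hj.not_ge hcj

theorem stmt_14
    (X : Set ℝ) (hX : X = {x : ℝ | ∃ k : ℕ, x = ((k : ℝ) + 1)⁻¹})
    (μ : Measure ℝ)
    (hμ : μ = Measure.sum fun k : ℕ =>
      ((2 : ℝ≥0∞)⁻¹ ^ (k + 1)) • Measure.dirac (((k : ℝ) + 1)⁻¹)) :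
    (∀ n : ℕ, ⨅ x ∈ X, μ (Metric.ball x ((2 : ℝ)⁻¹ ^ n)) =
        (2 : ℝ≥0∞) ^ ((1 : ℤ) - 2 ^ n)) ∧
      ¬∃ c : ℝ≥0∞, 0 < c ∧ ∀ n : ℕ,
        c * (2 : ℝ≥0∞)⁻¹ ^ n ≤ (2 : ℝ≥0∞) ^ ((1 : ℤ) - 2 ^ n) := by
  subst hX hμ
  simp only [ENNReal.two_zpow_one_sub_two_pow]
  refine ⟨fun n => ?_, ENNReal.not_exists_pos_mul_inv_two_pow_le_inv_two_pow_two_pow⟩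
  have hr : (2 : ℝ)⁻¹ ^ n = ((2 ^ n : ℕ) : ℝ)⁻¹ := by push_cast; exact inv_pow _ _
  have hcenter : (((2 ^ n : ℕ) : ℝ) ^ 2)⁻¹ ∈ {x : ℝ | ∃ k : ℕ, x = ((k : ℝ) + 1)⁻¹} :=
    ⟨(2 ^ n) ^ 2 - 1, by push_cast [Nat.one_le_pow _ _ (Nat.two_pow_pos n)]; ring⟩
  rw [hr]
  refine le_antisymm ((biInf_le _ hcenter).trans (harmonicAtoms_ball_le _)) (le_iInf₂ ?_)
  rintro _ ⟨m, rfl⟩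
  exact inv_two_pow_le_harmonicAtoms_ball (by positivity) m
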